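/- For every n ∈ ℤ and all k, l ∈ O with k ≤ l: the intersection of the kernel of Ψ with X^n_{k,l} equals the span of B^n_{k,l}, and the image Ψ(X^n_{k,l}) equals the ℚ-span of Y^n_{k,l} in Y. In particular, the restricted sequence 0 → span(B^n_{k,l}) → X^n_{k,l} → ℚ·Y^n_{k,l} → 0 is exact. -/

import Mathlib

/-- The type of odd integers. -/
abbrev OddZ : Type := {k : ℤ // Odd k}

/-- The ℚ-vector space `X` with basis indexed by `(a, b, k, l)`, `a, b ∈ ℤ`, `k, l` odd. -/
abbrev XSp : Type := (ℤ × ℤ × OddZ × OddZ) →₀ ℚ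

/-- The basis vector `X^{a,b}_{k,l}`. -/
noncomputable def Xb (a b : ℤ) (k l : OddZ) : XSp := Finsupp.single (a, b, k, l) 1

/-- The free ℚ-vector space on symbols indexed by `(n, k, l)`, `n ∈ ℤ`, `k, l` odd. -/
abbrev WSp : Type := (ℤ × OddZ × OddZ) →₀ ℚ

/-- The subspace of relations, spanned by the elements `Y^n_{k,l} + Y^n_{l,k}`. -/
noncomputable def YRel : Submodule ℚ WSp :=
  Submodule.span ℚ
    {w | ∃ (n : ℤ) (k l : OddZ),
      w = Finsupp.single (n, k, l) 1 + Finsupp.single (n, l, k) 1}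

/-- The space `Y`, the quotient of the free space by the relations `Y^n_{k,l} = -Y^n_{l,k}`. -/
abbrev YSp : Type := WSp ⧸ YRel

/-- The image `Y^n_{k,l}` of a generator in the quotient `Y`. -/
noncomputable def Yb (n : ℤ) (k l : OddZ) : YSp :=
  Submodule.Quotient.mk (Finsupp.single (n, k, l) 1)

/-- The subspace `X^n_{k,l}` spanned by all `X^{a,b}_{k,l}` and `X^{a,b}_{l,k}` with `a + b = n`. -/
noncomputable def Xsub (n : ℤ) (k l : OddZ) : Submodule ℚ XSp :=
  Submodule.span ℚ {x | ∃ a b : ℤ, a + b = n ∧ (x = Xb a b k l ∨ x = Xb a b l k)}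

/-- The set `B^n_{k,l} = {X^{a,b}_{k,l} + X^{b,a}_{l,k} : a + b = n} ∪
{X^{a,b+1}_{k,l} + X^{b,a+1}_{l,k} : a + b = n - 1}`. -/
def Bset (n : ℤ) (k l : OddZ) : Set XSp :=
  {x | ∃ a b : ℤ, a + b = n ∧ x = Xb a b k l + Xb b a l k} ∪
  {x | ∃ a b : ℤ, a + b = n - 1 ∧ x = Xb a (b + 1) k l + Xb b (a + 1) l k}

/-! Modulo `span B^n_{k,l}`, every `X^{a,b}_{k,l}` with `a + b = n` is congruent to
`u = X^{0,n}_{k,l}` and every `X^{a,b}_{l,k}` to `-u`, so `X^n_{k,l} = span B^n_{k,l} + ℚ u`,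
while `Ψ` kills `B^n_{k,l}` and sends `u` to `Y^n_{k,l}`. If `k ≠ l` then `Y^n_{k,l} ≠ 0`,
as the functional `Y^n_{k,l} ↦ sign (l - k)` on `Y` shows, so the kernel on `X^n_{k,l}` is
`span B^n_{k,l}`; if `k = l` then `u ≡ -u`, so `u` itself lies in `span B^n_{k,l}`. -/

open Submodule

lemma Yb_add_Yb_swap (n : ℤ) (k l : OddZ) : Yb n k l + Yb n l k = 0 :=
  (Quotient.mk_eq_zero YRel).2 (subset_span ⟨n, k, l, rfl⟩)

lemma Yb_swap (n : ℤ) (k l : OddZ) : Yb n l k = -Yb n k l :=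
  eq_neg_of_add_eq_zero_right (Yb_add_Yb_swap n k l)

lemma Yb_ne_zero {k l : OddZ} (hkl : k ≠ l) (n : ℤ) : Yb n k l ≠ 0 := by
  let g : WSp →ₗ[ℚ] ℚ :=
    Finsupp.linearCombination ℚ fun i => ((((i.2.2 : ℤ) - i.2.1).sign : ℤ) : ℚ)
  have hg : YRel ≤ LinearMap.ker g := by
    refine span_le.2 ?_
    rintro _ ⟨m, k', l', rfl⟩
    have : ((k' : ℤ) - l').sign = -((l' : ℤ) - k').sign := by
      rw [← Int.sign_neg, neg_sub]
    simp [g, this]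
  intro h
  have hsign := congrArg (YRel.liftQ g hg) h
  simp only [Yb, liftQ_apply, map_zero, g, Finsupp.linearCombination_single, one_smul,
    Int.cast_eq_zero, Int.sign_eq_zero_iff_zero, sub_eq_zero] at hsign
  exact hkl (Subtype.ext hsign.symm)

section Bspan

variable {n : ℤ} {k l : OddZ}

lemma span_Bset_le_Xsub : span ℚ (Bset n k l) ≤ Xsub n k l := by
  refine span_le.2 ?_
  rintro _ (⟨a, b, hab, rfl⟩ | ⟨a, b, hab, rfl⟩)
  · exact add_mem (subset_span ⟨a, b, hab, Or.inl rfl⟩) (subset_span ⟨b, a, by omega, Or.inr rfl⟩)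
  · exact add_mem (subset_span ⟨a, b + 1, by omega, Or.inl rfl⟩)
      (subset_span ⟨b, a + 1, by omega, Or.inr rfl⟩)

lemma span_Bset_le_ker {Ψ : XSp →ₗ[ℚ] YSp}
    (hΨ : ∀ (a b : ℤ) (k l : OddZ), Ψ (Xb a b k l) = Yb (a + b) k l) :
    span ℚ (Bset n k l) ≤ LinearMap.ker Ψ := by
  refine span_le.2 ?_
  rintro _ (⟨a, b, hab, rfl⟩ | ⟨a, b, hab, rfl⟩)
  · simp only [SetLike.mem_coe, LinearMap.mem_ker, map_add, hΨ, add_comm b a, Yb_add_Yb_swap]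
  · simp only [SetLike.mem_coe, LinearMap.mem_ker, map_add, hΨ,
      show b + (a + 1) = a + (b + 1) by ring, Yb_add_Yb_swap]

/-- Modulo `B`, `X^{a,b}_{k,l}` and `X^{a-1,b+1}_{k,l}` both equal `-X^{b,a}_{l,k}`. -/
lemma Xb_sub_Xb_zero_mem_span_Bset {a b : ℤ} (hab : a + b = n) :
    Xb a b k l - Xb 0 n k l ∈ span ℚ (Bset n k l) := by
  set S := span ℚ (Bset n k l)
  have hper : Function.Periodic (fun a : ℤ => S.mkQ (Xb a (n - a) k l)) 1 := by
    intro a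
    have h₁ : S.mkQ (Xb (a + 1) (n - (a + 1)) k l + Xb (n - (a + 1)) (a + 1) l k) = 0 :=
      (Quotient.mk_eq_zero S).2 (subset_span (Or.inl ⟨_, _, by ring, rfl⟩))
    have h₂ : S.mkQ (Xb a (n - (a + 1) + 1) k l + Xb (n - (a + 1)) (a + 1) l k) = 0 :=
      (Quotient.mk_eq_zero S).2 (subset_span (Or.inr ⟨_, _, by ring, rfl⟩))
    rw [map_add] at h₁ h₂
    rw [show n - (a + 1) + 1 = n - a by ring] at h₂
    exact (eq_neg_of_add_eq_zero_left h₁).trans (eq_neg_of_add_eq_zero_left h₂).symm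
  subst hab
  exact (Submodule.Quotient.eq S).1 (by simpa using hper.int_mul_eq a)

lemma Xb_swap_add_Xb_zero_mem_span_Bset {a b : ℤ} (hab : a + b = n) :
    Xb a b l k + Xb 0 n k l ∈ span ℚ (Bset n k l) := by
  have hBab : Xb b a k l + Xb a b l k ∈ span ℚ (Bset n k l) :=
    subset_span (Or.inl ⟨b, a, by omega, rfl⟩)
  convert sub_mem hBab (Xb_sub_Xb_zero_mem_span_Bset (by omega : b + a = n)) using 1
  abel

lemma Xsub_le_span_Bset_sup_span_Xb_zero :
    Xsub n k l ≤ span ℚ (Bset n k l) ⊔ span ℚ {Xb 0 n k l} := by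
  refine span_le.2 ?_
  rintro _ ⟨a, b, hab, rfl | rfl⟩
  · exact mem_sup.2 ⟨_, Xb_sub_Xb_zero_mem_span_Bset hab, _, mem_span_singleton_self _,
      sub_add_cancel _ _⟩
  · exact mem_sup.2 ⟨_, Xb_swap_add_Xb_zero_mem_span_Bset hab, _,
      neg_mem (mem_span_singleton_self _), add_neg_cancel_right _ _⟩

lemma Xb_zero_mem_span_Bset_self : Xb 0 n k k ∈ span ℚ (Bset n k k) := by
  have h := Xb_swap_add_Xb_zero_mem_span_Bset (k := k) (l := k) (zero_add n)
  rw [← two_smul ℚ] at h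
  exact (smul_mem_iff _ two_ne_zero).1 h

variable {Ψ : XSp →ₗ[ℚ] YSp}

lemma ker_inf_Xsub_le_span_Bset
    (hΨ : ∀ (a b : ℤ) (k l : OddZ), Ψ (Xb a b k l) = Yb (a + b) k l) :
    LinearMap.ker Ψ ⊓ Xsub n k l ≤ span ℚ (Bset n k l) := by
  intro x hmem
  obtain ⟨hker, hx⟩ := mem_inf.1 hmem
  obtain ⟨s, hs, _, hw, rfl⟩ := mem_sup.1 (Xsub_le_span_Bset_sup_span_Xb_zero hx)
  obtain ⟨c, rfl⟩ := mem_span_singleton.1 hw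
  refine add_mem hs ?_
  by_cases hkl : k = l
  · subst hkl
    exact smul_mem _ c Xb_zero_mem_span_Bset_self
  · have hs0 : Ψ s = 0 := span_Bset_le_ker hΨ hs
    have hc : c • Yb n k l = 0 := by
      rwa [LinearMap.mem_ker, map_add, hs0, zero_add, map_smul, hΨ, zero_add] at hker
    rw [(smul_eq_zero.1 hc).resolve_right (Yb_ne_zero hkl n), zero_smul]
    exact zero_mem _

lemma map_Xsub_eq_span_Yb
    (hΨ : ∀ (a b : ℤ) (k l : OddZ), Ψ (Xb a b k l) = Yb (a + b) k l) :
    map Ψ (Xsub n k l) = span ℚ {Yb n k l} := by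
  rw [Xsub, map_span]
  refine le_antisymm (span_le.2 ?_) (span_le.2 ?_)
  · rintro _ ⟨_, ⟨a, b, hab, rfl | rfl⟩, rfl⟩
    · rw [SetLike.mem_coe, hΨ, hab]
      exact mem_span_singleton_self _
    · rw [SetLike.mem_coe, hΨ, hab, Yb_swap n k l]
      exact (span ℚ {Yb n k l}).neg_mem (mem_span_singleton_self _)
  · rw [Set.singleton_subset_iff]
    exact subset_span ⟨Xb 0 n k l, ⟨0, n, zero_add n, Or.inl rfl⟩, by rw [hΨ, zero_add]⟩

end Bspan

theorem stmt_10_general (Ψ : XSp →ₗ[ℚ] YSp)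
    (hΨ : ∀ (a b : ℤ) (k l : OddZ), Ψ (Xb a b k l) = Yb (a + b) k l)
    (n : ℤ) (k l : OddZ) :
    LinearMap.ker Ψ ⊓ Xsub n k l = Submodule.span ℚ (Bset n k l) ∧
    Submodule.map Ψ (Xsub n k l) = Submodule.span ℚ {Yb n k l} :=
  ⟨le_antisymm (ker_inf_Xsub_le_span_Bset hΨ) (le_inf (span_Bset_le_ker hΨ) span_Bset_le_Xsub),
    map_Xsub_eq_span_Yb hΨ⟩

/-- For every `n ∈ ℤ` and odd `k ≤ l`: the intersection of the kernel of `Ψ` with `X^n_{k,l}`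
equals the span of `B^n_{k,l}`, and the image `Ψ(X^n_{k,l})` equals the span of `Y^n_{k,l}`
in `Y`; i.e. the restricted sequence `0 → span(B^n_{k,l}) → X^n_{k,l} → ℚ·Y^n_{k,l} → 0`
is exact. -/
theorem stmt_10 (Ψ : XSp →ₗ[ℚ] YSp)
    (hΨ : ∀ (a b : ℤ) (k l : OddZ), Ψ (Xb a b k l) = Yb (a + b) k l)
    (n : ℤ) (k l : OddZ) (hkl : (k : ℤ) ≤ (l : ℤ)) :
    LinearMap.ker Ψ ⊓ Xsub n k l = Submodule.span ℚ (Bset n k l) ∧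
    Submodule.map Ψ (Xsub n k l) = Submodule.span ℚ {Yb n k l} :=
  stmt_10_general Ψ hΨ n k l
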